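/- Let N be a real normed space, let θ ∈ ℕ be such that every finite set S of points in the closed ball B(o,2) with o ∈ S and ‖x − y‖ ≥ 1 for all distinct x, y ∈ S satisfies |S| ≤ θ. Let P be a finite set of points of N, all lying outside the open unit ball (‖p‖ ≥ 1 for all p ∈ P), and suppose each p ∈ P is assigned a radius λ_p ≥ 1 such that ‖p‖ ≤ λ_p + 1 (i.e., B(p, λ_p) meets B(o,1)) and such that for all distinct p, q ∈ P one has ‖p − q‖ ≥ max{λ_p, λ_q} (i.e., no center lies in the open ball of another). Then |P| ≤ θ − 1. -/

import Mathlib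

/-!
Map every point of `P` to the ball `B(o,2)` by the radial retraction `π`. A point `p ∈ P` has
`‖p‖ ≥ 1`, so `‖π p‖ ≥ 1`. For distinct `p, q ∈ P` with `‖p‖ ≤ ‖q‖` we have `‖p - q‖ ≥ 1` and
`‖p - q‖ ≥ λ_q ≥ ‖q‖ - 1`, and these two bounds are exactly what keeps `π p` and `π q` at
distance at least `1`. Hence `{o} ∪ π(P)` is a `1`-separated subset of `B(o,2)` containing `o`
with `|P| + 1` points.
-/

open Finset

section RadialRetraction

variable {E : Type*} [NormedAddCommGroup E] [NormedSpace ℝ E]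

noncomputable def radialRetraction (r : ℝ) (x : E) : E :=
  if ‖x‖ ≤ r then x else (r / ‖x‖) • x

lemma radialRetraction_of_norm_le {r : ℝ} {x : E} (h : ‖x‖ ≤ r) : radialRetraction r x = x :=
  if_pos h

lemma radialRetraction_of_lt_norm {r : ℝ} {x : E} (h : r < ‖x‖) :
    radialRetraction r x = (r / ‖x‖) • x :=
  if_neg h.not_ge

lemma norm_radialRetraction {r : ℝ} (hr : 0 ≤ r) (x : E) :
    ‖radialRetraction r x‖ = min ‖x‖ r := by
  rcases le_or_gt ‖x‖ r with h | h
  · rw [radialRetraction_of_norm_le h, min_eq_left h]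
  · have hx : 0 < ‖x‖ := hr.trans_lt h
    rw [radialRetraction_of_lt_norm h, norm_smul, Real.norm_of_nonneg (by positivity),
      min_eq_right h.le, div_mul_cancel₀ _ hx.ne']

lemma norm_sub_div_norm_smul_self {s : ℝ} {q : E} (hq : 0 < ‖q‖) (hs : s ≤ ‖q‖) :
    ‖q - (s / ‖q‖) • q‖ = ‖q‖ - s := by
  have hcoef : 0 ≤ 1 - s / ‖q‖ := sub_nonneg.2 ((div_le_one hq).2 hs)
  rw [show q - (s / ‖q‖) • q = (1 - s / ‖q‖) • q by rw [sub_smul, one_smul], norm_smul,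
    Real.norm_of_nonneg hcoef, sub_mul, one_mul, div_mul_cancel₀ _ hq.ne']

lemma sub_add_le_norm_sub_div_norm_smul {s : ℝ} {p q : E} (hq : 0 < ‖q‖) (hs : s ≤ ‖q‖) :
    ‖p - q‖ - ‖q‖ + s ≤ ‖p - (s / ‖q‖) • q‖ := by
  have htri := norm_sub_le_norm_sub_add_norm_sub p ((s / ‖q‖) • q) q
  rw [norm_sub_rev ((s / ‖q‖) • q), norm_sub_div_norm_smul_self hq hs] at htri
  linarith

lemma le_norm_radialRetraction_sub {d r : ℝ} {p q : E} (hd : 0 ≤ d) (hr : 2 * d ≤ r)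
    (hpq : ‖p‖ ≤ ‖q‖) (hsep : d ≤ ‖p - q‖) (hfar : ‖q‖ - d ≤ ‖p - q‖) :
    d ≤ ‖radialRetraction r p - radialRetraction r q‖ := by
  rcases le_or_gt ‖q‖ r with hq | hq
  · rwa [radialRetraction_of_norm_le hq, radialRetraction_of_norm_le (hpq.trans hq)]
  have hq0 : 0 < ‖q‖ := by linarith
  rw [radialRetraction_of_lt_norm hq]
  rcases le_or_gt ‖p‖ r with hp | hp
  · rw [radialRetraction_of_norm_le hp]
    linarith [sub_add_le_norm_sub_div_norm_smul (p := p) hq0 hq.le]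
  have hp0 : 0 < ‖p‖ := by linarith
  -- compare `p` with the point of norm `‖p‖` on the ray through `q`, then scale by `r / ‖p‖`
  have hrescale : (r / ‖p‖) • p - (r / ‖q‖) • q = (r / ‖p‖) • (p - (‖p‖ / ‖q‖) • q) := by
    rw [smul_sub, smul_smul, div_mul_div_cancel₀ hp0.ne']
  have hbase : ‖p‖ - d ≤ ‖p - (‖p‖ / ‖q‖) • q‖ := by
    linarith [sub_add_le_norm_sub_div_norm_smul (p := p) hq0 hpq]
  rw [radialRetraction_of_lt_norm hp, hrescale, norm_smul,
    Real.norm_of_nonneg (div_nonneg (by linarith) hp0.le), div_mul_eq_mul_div, le_div_iff₀ hp0]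
  nlinarith

end RadialRetraction

lemma one_le_norm_radialRetraction_sub_of_satellites {N : Type*} [NormedAddCommGroup N]
    [NormedSpace ℝ N] {lam : N → ℝ} {p q : N}
    (hlam : 1 ≤ lam p) (hmeet_p : ‖p‖ ≤ lam p + 1) (hmeet_q : ‖q‖ ≤ lam q + 1)
    (hsep : max (lam p) (lam q) ≤ ‖p - q‖) :
    1 ≤ ‖radialRetraction 2 p - radialRetraction 2 q‖ := by
  have hp := (le_max_left _ _).trans hsep
  have hq := (le_max_right _ _).trans hsep
  rcases le_total ‖p‖ ‖q‖ with hpq | hqp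
  · exact le_norm_radialRetraction_sub zero_le_one (by norm_num) hpq (by linarith) (by linarith)
  · rw [norm_sub_rev] at hp hq ⊢
    exact le_norm_radialRetraction_sub zero_le_one (by norm_num) hqp (by linarith) (by linarith)

section SeparatedImage

variable {α E : Type*} [NormedAddCommGroup E] [DecidableEq E] {f : α → E} {P : Finset α}

lemma one_le_norm_sub_of_mem_insert_zero_image (hnorm : ∀ p ∈ P, 1 ≤ ‖f p‖)
    (hsep : ∀ p ∈ P, ∀ q ∈ P, p ≠ q → 1 ≤ ‖f p - f q‖) :
    ∀ x ∈ insert 0 (P.image f), ∀ y ∈ insert 0 (P.image f), x ≠ y → 1 ≤ ‖x - y‖ := by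
  simp only [mem_insert, mem_image]
  rintro _ (rfl | ⟨p, hp, rfl⟩) _ (rfl | ⟨q, hq, rfl⟩) hne
  · exact absurd rfl hne
  · simpa using hnorm q hq
  · simpa using hnorm p hp
  · exact hsep p hp q hq (ne_of_apply_ne f hne)

lemma card_insert_zero_image (hnorm : ∀ p ∈ P, 1 ≤ ‖f p‖)
    (hsep : ∀ p ∈ P, ∀ q ∈ P, p ≠ q → 1 ≤ ‖f p - f q‖) :
    (insert 0 (P.image f)).card = P.card + 1 := by
  have hzero : (0 : E) ∉ P.image f := by
    simp only [mem_image, not_exists, not_and]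
    intro p hp hfp
    have h := hnorm p hp
    norm_num [hfp] at h
  have hinj : Set.InjOn f P := fun p hp q hq hfpq => by
    by_contra hpq
    have h := hsep p hp q hq hpq
    norm_num [hfpq] at h
  rw [card_insert_of_notMem hzero, card_image_of_injOn hinj]

end SeparatedImage

/-- Packing bound for the "satellite" configuration: if every finite subset of the
closed ball of radius 2 containing the origin with pairwise distances at least 1
has at most `θ` points, then any finite family of points outside the open unit
ball whose balls meet the unit ball and whose centers avoid each other's open
balls has at most `θ - 1` points. -/
theorem satellite_packing_bound {N : Type*} [NormedAddCommGroup N] [NormedSpace ℝ N]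
    (θ : ℕ)
    (hθ : ∀ S : Finset N, (∀ x ∈ S, ‖x‖ ≤ 2) → (0 : N) ∈ S →
      (∀ x ∈ S, ∀ y ∈ S, x ≠ y → 1 ≤ ‖x - y‖) → S.card ≤ θ)
    (P : Finset N) (lam : N → ℝ)
    (hout : ∀ p ∈ P, 1 ≤ ‖p‖)
    (hlam : ∀ p ∈ P, 1 ≤ lam p)
    (hmeet : ∀ p ∈ P, ‖p‖ ≤ lam p + 1)
    (hsep : ∀ p ∈ P, ∀ q ∈ P, p ≠ q → max (lam p) (lam q) ≤ ‖p - q‖) :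
    P.card ≤ θ - 1 := by
  classical
  set π : N → N := radialRetraction 2
  have hπ_sep : ∀ p ∈ P, ∀ q ∈ P, p ≠ q → 1 ≤ ‖π p - π q‖ := fun p hp q hq hpq =>
    one_le_norm_radialRetraction_sub_of_satellites (hlam p hp) (hmeet p hp) (hmeet q hq)
      (hsep p hp q hq hpq)
  have hπ_norm : ∀ p ∈ P, 1 ≤ ‖π p‖ ∧ ‖π p‖ ≤ 2 := fun p hp => by
    simp only [π, norm_radialRetraction zero_le_two]
    exact ⟨le_min (hout p hp) one_le_two, min_le_right _ _⟩
  have hcard := hθ (insert 0 (P.image π)) (by simpa using fun p hp => (hπ_norm p hp).2)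
    (mem_insert_self _ _)
    (one_le_norm_sub_of_mem_insert_zero_image (fun p hp => (hπ_norm p hp).1) hπ_sep)
  rw [card_insert_zero_image (fun p hp => (hπ_norm p hp).1) hπ_sep] at hcard
  omega
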